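/- For all integers g ≥ 1 and natural numbers m, n, every element f of V₋^{(g,m,n)} satisfies ι(f) = (−1)^{n+1} f. -/
import Mathlib


open MvPolynomial

noncomputable section

set_option maxHeartbeats 1000000
set_option synthInstance.maxHeartbeats 400000

/-- `K = ℂ(z₁,z₂)`, the field of rational functions in two variables over `ℂ`. -/
abbrev K2 : Type := FractionRing (MvPolynomial (Fin 2) ℂ)

/-- The rational function `z₁`. -/
def z1 : K2 := algebraMap (MvPolynomial (Fin 2) ℂ) K2 (X 0)

/-- The rational function `z₂`. -/
def z2 : K2 := algebraMap (MvPolynomial (Fin 2) ℂ) K2 (X 1)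

/-- The conifold discriminant `Δ₁ = (1−432z₁)³ − 27·(432z₁)³·z₂`. -/
def Δ1 : K2 := (1 - 432 * z1) ^ 3 - 27 * (432 * z1) ^ 3 * z2

/-- The conifold discriminant `Δ₂ = 1 + 27z₂`. -/
def Δ2 : K2 := 1 + 27 * z2

/-- `V₋^{(g,m,n)}`: the ℂ-span of `(1/432−2z₁)·z₁^{k₁}(1/432−z₁)^{k₂} z₂^n (Δ₁Δ₂)^{−(2g−2)}`
over all `k₁, k₂ ≥ 0` with `k₁+k₂ ≤ m−1` and `k₁−k₂ = 3n−6g+6`. -/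
def Vminus (g : ℤ) (m n : ℕ) : Submodule ℂ K2 :=
  Submodule.span ℂ
    {f : K2 | ∃ k₁ k₂ : ℕ, k₁ + k₂ + 1 ≤ m ∧ (k₁ : ℤ) - k₂ = 3 * n - 6 * g + 6 ∧
      f = (1 / 432 - 2 * z1) * z1 ^ k₁ * (1 / 432 - z1) ^ k₂ * z2 ^ n *
            (Δ1 * Δ2) ^ (-(2 * g - 2))}

lemma algMap_ne_zero {p : MvPolynomial (Fin 2) ℂ} (hp : p ≠ 0) :
    algebraMap (MvPolynomial (Fin 2) ℂ) K2 p ≠ 0 := by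
  simpa [IsFractionRing.to_map_eq_zero_iff] using hp

lemma half_eq : (1 / 432 : K2) = algebraMap (MvPolynomial (Fin 2) ℂ) K2 (C (1/432)) := by
  rw [← MvPolynomial.algebraMap_eq, ← IsScalarTower.algebraMap_apply ℂ (MvPolynomial (Fin 2) ℂ) K2,
    map_div₀, map_one, map_ofNat]

lemma b_ne : (1 / 432 : K2) - z1 ≠ 0 := by
  rw [half_eq, z1, ← map_sub]
  apply algMap_ne_zero
  intro h
  have := congrArg (MvPolynomial.eval (fun _ => (0:ℂ))) h
  simp at this

lemma Δ1_ne : Δ1 ≠ 0 := by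
  have : Δ1 = algebraMap (MvPolynomial (Fin 2) ℂ) K2
      ((1 - 432 * X 0) ^ 3 - 27 * (432 * X 0) ^ 3 * X 1) := by
    simp only [Δ1, z1, z2, map_sub, map_mul, map_pow, map_one, map_ofNat]
  rw [this]
  apply algMap_ne_zero
  intro h
  have := congrArg (MvPolynomial.eval (fun _ => (0:ℂ))) h
  simp at this

lemma Δ2_ne : Δ2 ≠ 0 := by
  have : Δ2 = algebraMap (MvPolynomial (Fin 2) ℂ) K2 (1 + 27 * X 1) := by
    simp only [Δ2, z2, map_add, map_mul, map_one, map_ofNat]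
  rw [this]
  apply algMap_ne_zero
  intro h
  have := congrArg (MvPolynomial.eval (fun _ => (0:ℂ))) h
  simp at this

/-- Every element `f` of `V₋^{(g,m,n)}` satisfies `ι(f) = (−1)^{n+1} f`. -/
theorem involution_on_Vminus (ι : K2 →ₐ[ℂ] K2)
    (h1 : ι z1 = 1 / 432 - z1)
    (h2 : ι z2 = -((432 * z1) ^ 3 * z2) / (1 - 432 * z1) ^ 3)
    (g : ℤ) (hg : 1 ≤ g) (m n : ℕ) :
    ∀ f ∈ Vminus g m n, ι f = (-1 : K2) ^ (n + 1) * f := by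
  unfold Vminus
  have ha : z1 ≠ 0 := by
    apply algMap_ne_zero; exact MvPolynomial.X_ne_zero 0
  have hb : (1 / 432 : K2) - z1 ≠ 0 := b_ne
  set r : K2 := z1 / (1 / 432 - z1) with hr_def
  have hr : r ≠ 0 := div_ne_zero ha hb
  have h432b : (1 : K2) - 432 * z1 = 432 * (1 / 432 - z1) := by ring
  have hbr : (1 / 432 - z1) * r = z1 := by
    rw [hr_def, mul_comm, div_mul_cancel₀ _ hb]
  have hz2 : ι z2 = -(r ^ 3) * z2 := by
    rw [h2, h432b, hr_def]
    field_simp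
  have hΔ1 : ι Δ1 = (432 * z1) ^ 3 * Δ2 := by
    calc ι Δ1 = (1 - 432 * (1 / 432 - z1)) ^ 3
          - 27 * (432 * (1 / 432 - z1)) ^ 3 * (-(r ^ 3) * z2) := by
          rw [Δ1]
          simp only [map_sub, map_mul, map_pow, map_one, map_ofNat, h1, hz2]
      _ = (432 * z1) ^ 3 + 27 * ((1 / 432 - z1) * r * 432) ^ 3 * z2 := by ring
      _ = (432 * z1) ^ 3 * Δ2 := by rw [hbr, Δ2]; ring
  have hb3 : ((432 : K2) * (1 / 432 - z1)) ^ 3 ≠ 0 := by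
    apply pow_ne_zero
    exact mul_ne_zero (by norm_num) hb
  have hΔ2 : ι Δ2 = Δ1 / (432 * (1 / 432 - z1)) ^ 3 := by
    rw [eq_div_iff hb3]
    calc ι Δ2 * (432 * (1 / 432 - z1)) ^ 3
        = (1 + 27 * (-(r ^ 3) * z2)) * (432 * (1 / 432 - z1)) ^ 3 := by
          rw [Δ2, map_add, map_mul, map_one, map_ofNat, hz2]
      _ = (432 * (1 / 432 - z1)) ^ 3 - 27 * (432 * ((1 / 432 - z1) * r)) ^ 3 * z2 := by ring
      _ = Δ1 := by rw [hbr, Δ1, h432b]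
  have hc : ι (Δ1 * Δ2) = r ^ 3 * (Δ1 * Δ2) := by
    rw [map_mul, hΔ1, hΔ2, hr_def]
    field_simp
  have hfirst : ι (1 / 432 - 2 * z1) = -(1 / 432 - 2 * z1) := by
    rw [map_sub, map_mul, h1, map_div₀, map_one, map_ofNat, map_ofNat]
    ring
  have hbfac : ι (1 / 432 - z1) = z1 := by
    rw [map_sub, h1, map_div₀, map_one, map_ofNat]
    ring
  have h3 : r ^ (3 : ℕ) = r ^ (3 : ℤ) := by
    rw [← zpow_natCast]; norm_num
  intro f hf
  induction hf using Submodule.span_induction with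
  | zero => simp
  | add x y hx hy ihx ihy => rw [map_add, ihx, ihy]; ring
  | smul c x hx ih =>
    have hs : ι (c • x) = c • ι x := ι.toLinearMap.map_smul c x
    rw [hs, ih, ← mul_smul_comm]
  | mem x hx =>
    obtain ⟨k₁, k₂, hk, hd, rfl⟩ := hx
    set e : ℤ := -(2 * g - 2) with he
    rw [map_mul, map_zpow₀, hc, map_mul, map_mul, map_mul, map_pow, map_pow, map_pow,
      hfirst, h1, hbfac, hz2]
    have key1 : (r ^ 3 * (Δ1 * Δ2)) ^ e = r ^ ((3:ℤ) * e) * (Δ1 * Δ2) ^ e := by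
      rw [mul_zpow, h3, ← zpow_mul]
    have key2 : (-(r ^ 3) * z2) ^ n = (-1 : K2) ^ n * r ^ (3 * n : ℕ) * z2 ^ n := by
      rw [show -(r ^ 3) * z2 = (-1 : K2) * (r ^ 3 * z2) by ring, mul_pow, mul_pow, ← pow_mul]
      ring
    have key3 : r ^ (3 * n : ℕ) * r ^ ((3:ℤ) * e) = r ^ ((k₁ : ℤ) - k₂) := by
      rw [← zpow_natCast r (3 * n), ← zpow_add₀ hr]
      congr 1
      push_cast
      omega
    have key4 : (1 / 432 - z1) ^ k₁ * z1 ^ k₂ * r ^ ((k₁ : ℤ) - k₂) =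
        z1 ^ k₁ * (1 / 432 - z1) ^ k₂ := by
      have e1 : r ^ ((k₁:ℤ) - k₂) = z1 ^ ((k₁:ℤ) - k₂) * (1 / 432 - z1) ^ (-((k₁:ℤ) - k₂)) := by
        rw [hr_def, div_zpow, zpow_neg, div_eq_mul_inv]
      calc (1 / 432 - z1) ^ k₁ * z1 ^ k₂ * r ^ ((k₁:ℤ) - k₂)
          = (z1 ^ (k₂:ℤ) * z1 ^ ((k₁:ℤ) - k₂)) *
            ((1 / 432 - z1) ^ (k₁:ℤ) * (1 / 432 - z1) ^ (-((k₁:ℤ) - k₂))) := by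
            rw [e1, zpow_natCast, zpow_natCast]; ring
        _ = z1 ^ ((k₂:ℤ) + ((k₁:ℤ) - k₂)) *
            (1 / 432 - z1) ^ ((k₁:ℤ) + -((k₁:ℤ) - k₂)) := by
            rw [zpow_add₀ ha, zpow_add₀ hb]
        _ = z1 ^ (k₁:ℤ) * (1 / 432 - z1) ^ (k₂:ℤ) := by
            rw [show (k₂:ℤ) + ((k₁:ℤ) - k₂) = (k₁:ℤ) by ring,
              show (k₁:ℤ) + -((k₁:ℤ) - k₂) = (k₂:ℤ) by ring]
        _ = z1 ^ k₁ * (1 / 432 - z1) ^ k₂ := by rw [zpow_natCast, zpow_natCast]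
    calc -(1 / 432 - 2 * z1) * (1 / 432 - z1) ^ k₁ * z1 ^ k₂ * (-(r ^ 3) * z2) ^ n *
          (r ^ 3 * (Δ1 * Δ2)) ^ e
        = (-1 : K2) ^ (n + 1) * ((1 / 432 - 2 * z1) *
            ((1 / 432 - z1) ^ k₁ * z1 ^ k₂ * (r ^ (3 * n : ℕ) * r ^ ((3:ℤ) * e))) *
            z2 ^ n * (Δ1 * Δ2) ^ e) := by
          rw [key1, key2]; ring
      _ = (-1 : K2) ^ (n + 1) * ((1 / 432 - 2 * z1) * z1 ^ k₁ * (1 / 432 - z1) ^ k₂ *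
            z2 ^ n * (Δ1 * Δ2) ^ e) := by
          rw [key3, key4]; ring

end
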